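/- arXiv:2406.14606 — 3 statements merged into one kernel-verified Lean document; each statement's English description precedes it below -/
import Mathlib

section
/- Taking initial forms commutes for compatible directions: if \rho and \rho' both attain their maxima over Newt P on a common face (equivalently, they lie in a common cone of the normal fan), then (P|_\rho)|_{\rho'} = (P|_{\rho'})|_\rho. -/
open Finset
open scoped Classical

/-- The support of the initial form `P|_ρ`: the monomials of the support `S`
on which the functional `ρ ⬝ ·` attains its maximum over `S` (equivalently over
`Newt P`).  Since the coefficients are unchanged, the initial form is determined
by this subset of the support. -/
noncomputable def initForm (n : ℕ) (ρ : Fin n → ℝ) (S : Finset (Fin n → ℝ)) :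
    Finset (Fin n → ℝ) :=
  S.filter fun m => ∀ m' ∈ S, ∑ i, ρ i * m' i ≤ ∑ i, ρ i * m i

lemma initForm_aux (n : ℕ) (S : Finset (Fin n → ℝ)) (ρ ρ' : Fin n → ℝ)
    (m0 : Fin n → ℝ) (hm0 : m0 ∈ S)
    (h1 : ∀ m' ∈ S, ∑ i, ρ i * m' i ≤ ∑ i, ρ i * m0 i)
    (h2 : ∀ m' ∈ S, ∑ i, ρ' i * m' i ≤ ∑ i, ρ' i * m0 i) :
    initForm n ρ' (initForm n ρ S) =
      S.filter (fun m => (∀ m' ∈ S, ∑ i, ρ i * m' i ≤ ∑ i, ρ i * m i) ∧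
        (∀ m' ∈ S, ∑ i, ρ' i * m' i ≤ ∑ i, ρ' i * m i)) := by
  ext m
  simp only [initForm, mem_filter]
  constructor
  · rintro ⟨⟨hmS, hρ⟩, hρ'⟩
    refine ⟨hmS, hρ, fun m' hm' => ?_⟩
    exact le_trans (h2 m' hm') (hρ' m0 ⟨hm0, h1⟩)
  · rintro ⟨hmS, hρ, hρ'⟩
    exact ⟨⟨hmS, hρ⟩, fun m' hm' => hρ' m' hm'.1⟩

/-- Taking initial forms commutes for compatible directions: if `ρ` and `ρ'`
attain their maxima over `Newt P` on a common face (witnessed by a common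
maximizing point of the support), then `(P|_ρ)|_{ρ'} = (P|_{ρ'})|_ρ`. -/
theorem stmt_5 (n : ℕ) (S : Finset (Fin n → ℝ)) (ρ ρ' : Fin n → ℝ)
    (hcompat : ∃ m ∈ S, (∀ m' ∈ S, ∑ i, ρ i * m' i ≤ ∑ i, ρ i * m i) ∧
      (∀ m' ∈ S, ∑ i, ρ' i * m' i ≤ ∑ i, ρ' i * m i)) :
    initForm n ρ' (initForm n ρ S) = initForm n ρ (initForm n ρ' S) := by
  obtain ⟨m0, hm0, h1, h2⟩ := hcompat
  rw [initForm_aux n S ρ ρ' m0 hm0 h1 h2, initForm_aux n S ρ' ρ m0 hm0 h2 h1]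
  ext m
  simp only [mem_filter]
  tauto
end

section
/- If \sigma' is a cone of the normal fan of Newt P compatible with the cone \sigma (i.e., the corresponding faces F_\sigma and F_{\sigma'} intersect in a face of Newt P), then Trop(P|_\sigma) coincides with Trop P on \sigma', and Trop(P|_\sigma) extends Trop P linearly over \sigma' + Span(Rays \sigma): for \rho' \in \sigma' and any real linear combination v of the rays of \sigma, Trop(P|_\sigma)(\rho' + v) = Trop P(\rho') + Trop(P|_\sigma)(v) with Trop(P|_\sigma) linear on Span(Rays \sigma). -/
open Finset

/-- `Trop P (ρ) = max_{m ∈ S} ρ ⬝ m`. -/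
noncomputable def trop (n : ℕ) (S : Finset (Fin n → ℝ)) (hS : S.Nonempty)
    (ρ : Fin n → ℝ) : ℝ :=
  S.sup' hS fun m => ∑ i, ρ i * m i

lemma trop_eq_of_max (n : ℕ) (S : Finset (Fin n → ℝ)) (hS : S.Nonempty)
    (ρ : Fin n → ℝ) (m0 : Fin n → ℝ) (hm0 : m0 ∈ S)
    (hmax : ∀ m' ∈ S, ∑ i, ρ i * m' i ≤ ∑ i, ρ i * m0 i) :
    trop n S hS ρ = ∑ i, ρ i * m0 i := by
  apply le_antisymm
  · exact Finset.sup'_le hS _ hmax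
  · exact Finset.le_sup' (fun m => ∑ i, ρ i * m i) hm0

lemma expand (n k : ℕ) (r : Fin k → (Fin n → ℝ)) (ρ' : Fin n → ℝ)
    (c : Fin k → ℝ) (m : Fin n → ℝ) :
    ∑ i, (ρ' + ∑ j, c j • r j) i * m i
      = (∑ i, ρ' i * m i) + ∑ j, c j * ∑ i, r j i * m i := by
  simp only [Pi.add_apply, Finset.sum_apply, Pi.smul_apply, smul_eq_mul, add_mul,
    Finset.sum_add_distrib, Finset.sum_mul, Finset.mul_sum]
  rw [Finset.sum_comm]
  ring_nf

/-- Let `σ` be the cone of the normal fan of `Newt P` spanned by the rays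
`r 0, …, r (k-1)`, so that the support of the initial form `P|_σ` is
`S_σ = {m ∈ S | every r i is maximized over S at m}` (the lattice points of the
dual face).  If `ρ'` is compatible with `σ` (there is a common point of `S`
maximizing `ρ'` and all the rays of `σ`), then for every
`v = ∑ i, c i • r i ∈ Span (Rays σ)` the maximum of `ρ' + v` over `S_σ` exists
and equals `Trop P (ρ') + ∑ i, c i * Trop P (r i)`:
`Trop (P|_σ)` coincides with `Trop P` on cones compatible with `σ` and extends
it linearly over `σ' + Span (Rays σ)`. -/
theorem stmt_8 (n k : ℕ) (S : Finset (Fin n → ℝ)) (hS : S.Nonempty)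
    (r : Fin k → (Fin n → ℝ)) (ρ' : Fin n → ℝ)
    (hcompat : ∃ m0 ∈ S, (∀ m' ∈ S, ∑ i, ρ' i * m' i ≤ ∑ i, ρ' i * m0 i) ∧
      ∀ j, ∀ m' ∈ S, ∑ i, (r j) i * m' i ≤ ∑ i, (r j) i * m0 i)
    (c : Fin k → ℝ) :
    IsGreatest
      ((fun m => ∑ i, (ρ' + ∑ j, c j • r j) i * m i) ''
        {m | m ∈ S ∧ ∀ j, ∀ m' ∈ S, ∑ i, (r j) i * m' i ≤ ∑ i, (r j) i * m i})
      (trop n S hS ρ' + ∑ j, c j * trop n S hS (r j)) := by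
  obtain ⟨m0, hm0S, hρ', hr⟩ := hcompat
  have htropρ' : trop n S hS ρ' = ∑ i, ρ' i * m0 i := trop_eq_of_max n S hS ρ' m0 hm0S hρ'
  have htropr : ∀ j, trop n S hS (r j) = ∑ i, r j i * m0 i := fun j =>
    trop_eq_of_max n S hS (r j) m0 hm0S (hr j)
  constructor
  · refine ⟨m0, ⟨hm0S, hr⟩, ?_⟩
    simp only []
    rw [expand, htropρ']
    congr 1
    exact Finset.sum_congr rfl fun j _ => by rw [htropr j]
  · rintro x ⟨m, ⟨hmS, hmr⟩, rfl⟩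
    simp only []
    rw [expand]
    apply add_le_add
    · rw [htropρ']; exact hρ' m hmS
    · apply le_of_eq
      refine Finset.sum_congr rfl fun j _ => ?_
      rw [htropr j]
      congr 1
      exact le_antisymm (hr j m hmS) (hmr j m0 hm0S)
end

section
/- Negativity of the tropicalization on all rays implies convergence: if f(\alpha) = \alpha^{\nu} \prod_j P_j(\alpha)^{-c_j} is an Euler integrand in one variable (n=1) with positive-coefficient polynomials P_j, and Trop f(1) < 0 and Trop f(-1) < 0, then \int_0^\infty f(\alpha) d\alpha/\alpha converges. -/
open Finset MeasureTheory

private lemma rpow_le_max_aux {a b x : ℝ} (e : ℝ) (ha : 0 < a) (hax : a ≤ x) (hxb : x ≤ b) :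
    x ^ e ≤ max (a ^ e) (b ^ e) := by
  rcases le_or_gt 0 e with he | he
  · exact le_max_of_le_right (Real.rpow_le_rpow (ha.le.trans hax) hxb he)
  · exact le_max_of_le_left (Real.rpow_le_rpow_of_nonpos ha hax he.le)

/-- Negativity of the tropicalization on both rays implies convergence of a
one-dimensional Euler integral: for `f(α) = α^ν ∏_j P_j(α)^{-c_j}` with
positive-coefficient polynomials `P_j` (support `S j ⊂ ℕ`), the conditions
`Trop f (1) = ν - ∑_j c_j max(S j) < 0` and
`Trop f (-1) = -ν + ∑_j c_j min(S j) < 0` imply that `∫_0^∞ f(α) dα/α`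
converges. -/
theorem stmt_9 (m : ℕ) (S : Fin m → Finset ℕ) (hS : ∀ j, (S j).Nonempty)
    (s : Fin m → ℕ → ℝ) (hs : ∀ j, ∀ k ∈ S j, 0 < s j k)
    (ν : ℝ) (c : Fin m → ℝ)
    (htrop1 : ν - ∑ j, c j * ((S j).max' (hS j) : ℝ) < 0)
    (htrop2 : -ν + ∑ j, c j * ((S j).min' (hS j) : ℝ) < 0) :
    IntegrableOn
      (fun α : ℝ => (α ^ ν * ∏ j, (∑ k ∈ S j, s j k * α ^ (k : ℝ)) ^ (-(c j))) / α)
      (Set.Ioi 0) := by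
  set f : ℝ → ℝ :=
    fun α : ℝ => (α ^ ν * ∏ j, (∑ k ∈ S j, s j k * α ^ (k : ℝ)) ^ (-(c j))) / α with hfdef
  have hmeas : Measurable f := by
    apply Measurable.div _ measurable_id
    apply Measurable.mul
    · measurability
    · apply Finset.measurable_prod
      intro j _
      have : Measurable fun α : ℝ => ∑ k ∈ S j, s j k * α ^ (k : ℝ) := by
        apply Finset.measurable_sum
        intro k _
        measurability
      measurability
  have hfnn : ∀ α : ℝ, 0 < α → 0 ≤ f α := by
    intro α hα
    apply div_nonneg _ hα.le
    apply mul_nonneg (Real.rpow_nonneg hα.le _)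
    exact Finset.prod_nonneg fun j _ => Real.rpow_nonneg
      (Finset.sum_nonneg fun k hk => mul_nonneg (hs j k hk).le (Real.rpow_nonneg hα.le _)) _
  set C : (Fin m → ℕ) → ℝ :=
    fun μ => ∏ j, max ((s j (μ j)) ^ (-(c j))) ((∑ k ∈ S j, s j k) ^ (-(c j))) with hCdef
  have key : ∀ (μ : Fin m → ℕ), (∀ j, μ j ∈ S j) →
      ∀ α : ℝ, 0 < α → (∀ j, ∀ k ∈ S j, α ^ (k : ℝ) ≤ α ^ (μ j : ℝ)) →
      f α ≤ C μ * α ^ (ν - (∑ j, c j * (μ j : ℝ)) - 1) := by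
    intro μ hμ α hα hconv
    have hαle : ∀ j, (∑ k ∈ S j, s j k * α ^ (k : ℝ)) ≤ (∑ k ∈ S j, s j k) * α ^ (μ j : ℝ) := by
      intro j
      rw [Finset.sum_mul]
      exact Finset.sum_le_sum fun k hk => mul_le_mul_of_nonneg_left (hconv j k hk) (hs j k hk).le
    have hαge : ∀ j, s j (μ j) * α ^ (μ j : ℝ) ≤ ∑ k ∈ S j, s j k * α ^ (k : ℝ) := fun j =>
      Finset.single_le_sum
        (fun k hk => mul_nonneg (hs j k hk).le (Real.rpow_nonneg hα.le _)) (hμ j)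
    have hP : ∀ j, (∑ k ∈ S j, s j k * α ^ (k : ℝ)) ^ (-(c j)) ≤
        (max ((s j (μ j)) ^ (-(c j))) ((∑ k ∈ S j, s j k) ^ (-(c j)))) *
          α ^ ((μ j : ℝ) * (-(c j))) := by
      intro j
      have h1 : 0 < s j (μ j) * α ^ (μ j : ℝ) :=
        mul_pos (hs j _ (hμ j)) (Real.rpow_pos_of_pos hα _)
      have h2 := rpow_le_max_aux (-(c j)) h1 (hαge j) (hαle j)
      rw [Real.mul_rpow (hs j _ (hμ j)).le (Real.rpow_nonneg hα.le _),
        Real.mul_rpow (Finset.sum_nonneg fun k hk => (hs j k hk).le)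
          (Real.rpow_nonneg hα.le _), ← Real.rpow_mul hα.le] at h2
      rw [max_mul_of_nonneg _ _ (Real.rpow_nonneg hα.le _)]
      exact h2
    have hprodle : (∏ j, (∑ k ∈ S j, s j k * α ^ (k : ℝ)) ^ (-(c j))) ≤
        C μ * α ^ (∑ j, (μ j : ℝ) * (-(c j))) := by
      calc (∏ j, (∑ k ∈ S j, s j k * α ^ (k : ℝ)) ^ (-(c j)))
          ≤ ∏ j, ((max ((s j (μ j)) ^ (-(c j))) ((∑ k ∈ S j, s j k) ^ (-(c j)))) *
            α ^ ((μ j : ℝ) * (-(c j)))) :=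
            Finset.prod_le_prod (fun j _ => Real.rpow_nonneg
              (Finset.sum_nonneg fun k hk =>
                mul_nonneg (hs j k hk).le (Real.rpow_nonneg hα.le _)) _)
              (fun j _ => hP j)
        _ = C μ * α ^ (∑ j, (μ j : ℝ) * (-(c j))) := by
            rw [Finset.prod_mul_distrib, hCdef, Real.rpow_sum_of_pos hα]
    have hposdiv : 0 < α ^ ν / α := div_pos (Real.rpow_pos_of_pos hα _) hα
    have hsum : (∑ j, (μ j : ℝ) * (-(c j))) = -∑ j, c j * (μ j : ℝ) := by
      rw [← Finset.sum_neg_distrib]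
      exact Finset.sum_congr rfl fun j _ => by ring
    calc f α = (α ^ ν / α) * ∏ j, (∑ k ∈ S j, s j k * α ^ (k : ℝ)) ^ (-(c j)) := by
          rw [hfdef]; ring
      _ ≤ (α ^ ν / α) * (C μ * α ^ (∑ j, (μ j : ℝ) * (-(c j)))) :=
          mul_le_mul_of_nonneg_left hprodle hposdiv.le
      _ = C μ * α ^ (ν - (∑ j, c j * (μ j : ℝ)) - 1) := by
          rw [hsum, show ν - (∑ j, c j * (μ j : ℝ)) - 1 =
            (ν + -∑ j, c j * (μ j : ℝ)) - 1 by ring,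
            Real.rpow_sub hα, Real.rpow_add hα, Real.rpow_one]
          ring
  have hC0 : ∀ μ : Fin m → ℕ, (∀ j, μ j ∈ S j) → 0 ≤ C μ := by
    intro μ hμ
    exact Finset.prod_nonneg fun j _ =>
      le_trans (Real.rpow_nonneg (hs j _ (hμ j)).le _) (le_max_left _ _)
  -- piece on (0, 1]
  have h1 : IntegrableOn f (Set.Ioc (0:ℝ) 1) := by
    set μ := fun j => (S j).min' (hS j) with hμdef
    have hμ : ∀ j, μ j ∈ S j := fun j => (S j).min'_mem (hS j)
    have he : (-1 : ℝ) < ν - (∑ j, c j * (μ j : ℝ)) - 1 := by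
      simp only [hμdef]; linarith
    have hg : IntegrableOn (fun α : ℝ => C μ * α ^ (ν - (∑ j, c j * (μ j : ℝ)) - 1))
        (Set.Ioc (0:ℝ) 1) := by
      have := intervalIntegral.intervalIntegrable_rpow' (a := 0) (b := 1) he
      rw [intervalIntegrable_iff_integrableOn_Ioc_of_le zero_le_one] at this
      exact this.const_mul _
    apply hg.mono' (hmeas.aestronglyMeasurable.restrict)
    filter_upwards [ae_restrict_mem measurableSet_Ioc] with α hα
    rw [Real.norm_of_nonneg (hfnn α hα.1)]
    refine key μ hμ α hα.1 fun j k hk => ?_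
    exact Real.rpow_le_rpow_of_exponent_ge hα.1 hα.2
      (by exact_mod_cast (S j).min'_le k hk)
  -- piece on (1, ∞)
  have h2 : IntegrableOn f (Set.Ioi (1:ℝ)) := by
    set μ := fun j => (S j).max' (hS j) with hμdef
    have hμ : ∀ j, μ j ∈ S j := fun j => (S j).max'_mem (hS j)
    have he : ν - (∑ j, c j * (μ j : ℝ)) - 1 < -1 := by
      simp only [hμdef]; linarith
    have hg : IntegrableOn (fun α : ℝ => C μ * α ^ (ν - (∑ j, c j * (μ j : ℝ)) - 1))
        (Set.Ioi (1:ℝ)) :=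
      (integrableOn_Ioi_rpow_of_lt he zero_lt_one).const_mul _
    apply hg.mono' (hmeas.aestronglyMeasurable.restrict)
    filter_upwards [ae_restrict_mem measurableSet_Ioi] with α hα
    have hα0 : (0:ℝ) < α := lt_trans zero_lt_one hα
    rw [Real.norm_of_nonneg (hfnn α hα0)]
    refine key μ hμ α hα0 fun j k hk => ?_
    exact Real.rpow_le_rpow_of_exponent_le hα.le
      (by exact_mod_cast (S j).le_max' k hk)
  rw [show Set.Ioi (0:ℝ) = Set.Ioc 0 1 ∪ Set.Ioi 1 from
    (Set.Ioc_union_Ioi_eq_Ioi zero_le_one).symm]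
  exact h1.union h2
end
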